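/- arXiv:1401.7123 — 3 statements merged into one kernel-verified Lean document; each statement's English description precedes it below -/
import Mathlib

section
/- For all natural numbers n and k with k ≥ 1, the number of partitions of n into exactly k parts such that any two distinct parts differ by at least 1 (i.e., all parts are distinct) and every part is at least 2, equals the alternating sum over i from 0 to k of (-1)^i times the number of partitions of n - i into exactly k - i distinct parts: p^{(1)}_k(n,2) = Σ_{i=0}^{k} (-1)^i p^{(1)}_{k-i}(n-i). Here any term whose first argument would be negative is taken to be 0. -/
/-- A multiset of naturals is `d`-distant if any two parts occupying different
positions (i.e. counting multiplicity) differ by at least `d`.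
For `d = 1` this says all parts are distinct; for `d = 0` it is no constraint. -/
def Multiset.DDistant (d : ℕ) (s : Multiset ℕ) : Prop :=
  ∀ a ∈ s, ∀ b ∈ s.erase a, d ≤ max a b - min a b

/-- `p^{(d)}_k(n)`: the number of partitions of `n` into exactly `k` parts
with pairwise differences at least `d`. -/
noncomputable def distantPartitions (d k n : ℕ) : ℕ :=
  Nat.card {p : n.Partition // p.parts.card = k ∧ Multiset.DDistant d p.parts}

/-- `p^{(d)}_k(n, r)`: the number of partitions of `n` into exactly `k` parts
with pairwise differences at least `d` and every part at least `r`. -/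
noncomputable def distantPartitionsMin (d k n r : ℕ) : ℕ :=
  Nat.card {p : n.Partition //
    p.parts.card = k ∧ Multiset.DDistant d p.parts ∧ ∀ a ∈ p.parts, r ≤ a}
/-
Removing the smallest part `r` from a `d`-distant partition whose parts are all at least `r`
shows that such partitions into `k + 1` parts either have all parts at least `r + 1`, or arise
from a `d`-distant partition of `n - r` into `k` parts that are all at least `r + d`. For
`d = r = 1` this reads `p_{k+1}(n+1) = p_{k+1}(n+1,2) + p_k(n,2)`, and an induction on `k`
turns it into the alternating sum.
-/

namespace Multiset

variable {d : ℕ}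

theorem DDistant.mono {s t : Multiset ℕ} (hs : s.DDistant d) (hts : t ≤ s) : t.DDistant d :=
  fun a ha b hb => hs a (mem_of_le hts ha) b (mem_of_le (erase_le_erase a hts) hb)

theorem dDistant_cons {r : ℕ} {t : Multiset ℕ} :
    (r ::ₘ t).DDistant d ↔ t.DDistant d ∧ ∀ b ∈ t, d ≤ max r b - min r b := by
  refine ⟨fun h => ⟨h.mono (le_cons_self t r), fun b hb => h r (mem_cons_self r t) b ?_⟩, ?_⟩
  · rwa [erase_cons_head]
  rintro ⟨ht, hr⟩ a ha b hb
  by_cases har : a = r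
  · subst har
    rw [erase_cons_head] at hb
    exact hr b hb
  rw [erase_cons_tail t (Ne.symm har)] at hb
  have ha' : a ∈ t := (mem_cons.1 ha).resolve_left har
  rcases mem_cons.1 hb with rfl | hb
  · rw [max_comm, min_comm]
    exact hr a ha'
  · exact ht a ha' b hb

end Multiset

theorem Multiset.cons_min_dDistant_iff (d k r : ℕ) (t : Multiset ℕ) :
    ((r ::ₘ t).card = k + 1 ∧ (r ::ₘ t).DDistant d ∧ ∀ a ∈ r ::ₘ t, r ≤ a) ↔
      (t.card = k ∧ t.DDistant d ∧ ∀ a ∈ t, r + d ≤ a) := by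
  have key : ((∀ b ∈ t, d ≤ max r b - min r b) ∧ ∀ b ∈ t, r ≤ b) ↔ ∀ b ∈ t, r + d ≤ b := by
    simp only [← forall_and]
    refine forall₂_congr fun b _ => ?_
    omega
  simp only [Multiset.card_cons, Nat.add_right_cancel_iff, Multiset.dDistant_cons,
    Multiset.forall_mem_cons, le_refl, true_and, and_assoc, key]

theorem distantPartitions_eq_distantPartitionsMin_one (d k n : ℕ) :
    distantPartitions d k n = distantPartitionsMin d k n 1 :=
  Nat.card_congr <| Equiv.subtypeEquivRight fun p =>
    ⟨fun ⟨hk, hd⟩ => ⟨hk, hd, fun _ => p.parts_pos⟩, fun ⟨hk, hd, _⟩ => ⟨hk, hd⟩⟩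

theorem distantPartitionsMin_zero_left (d n r : ℕ) :
    distantPartitionsMin d 0 n r = distantPartitions d 0 n :=
  Nat.card_congr <| Equiv.subtypeEquivRight fun _ =>
    ⟨fun ⟨hk, hd, _⟩ => ⟨hk, hd⟩, fun ⟨hk, hd⟩ =>
      ⟨hk, hd, fun a ha => absurd (Multiset.card_eq_zero.1 hk ▸ ha) (Multiset.notMem_zero a)⟩⟩

theorem distantPartitionsMin_succ_zero (d k r : ℕ) : distantPartitionsMin d (k + 1) 0 r = 0 := by
  rw [distantPartitionsMin, Nat.card_eq_zero]
  left
  refine isEmpty_subtype _ |>.2 fun _ ⟨hk, _⟩ => ?_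
  simp at hk

theorem distantPartitionsMin_eq_add (d k : ℕ) {m r : ℕ} (hr : 1 ≤ r) (hrm : r ≤ m) :
    distantPartitionsMin d (k + 1) m r =
      distantPartitionsMin d (k + 1) m (r + 1) + distantPartitionsMin d k (m - r) (r + d) := by
  set Q : m.Partition → Prop := fun p =>
    p.parts.card = k + 1 ∧ p.parts.DDistant d ∧ ∀ a ∈ p.parts, r ≤ a
  have without_r : {x : {p // Q p} // r ∉ x.1.parts} ≃
      {p : m.Partition // p.parts.card = k + 1 ∧ p.parts.DDistant d ∧ ∀ a ∈ p.parts, r + 1 ≤ a} :=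
    (Equiv.subtypeSubtypeEquivSubtypeInter Q (r ∉ ·.parts)).trans <|
      Equiv.subtypeEquivRight fun _ =>
        ⟨fun ⟨⟨hk, hd, hle⟩, hr⟩ => ⟨hk, hd, fun a ha => (hle a ha).lt_of_ne fun h => hr (h ▸ ha)⟩,
          fun ⟨hk, hd, hlt⟩ => ⟨⟨hk, hd, fun a ha => Nat.le_of_succ_le (hlt a ha)⟩,
            fun h => Nat.not_succ_le_self r (hlt r h)⟩⟩
  have with_r : {x : {p // Q p} // r ∈ x.1.parts} ≃
      {q : (m - r).Partition // q.parts.card = k ∧ q.parts.DDistant d ∧ ∀ a ∈ q.parts, r + d ≤ a} :=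
    (Equiv.subtypeSubtypeEquivSubtypeInter Q (r ∈ ·.parts)).trans <|
      (Equiv.subtypeEquivRight fun _ => and_comm).trans <|
        (Equiv.subtypeSubtypeEquivSubtypeInter (r ∈ ·.parts) Q).symm.trans <|
          Equiv.subtypeEquiv (Nat.Partition.partitionWithPartEquiv hr hrm) fun y => by
            have := Multiset.cons_min_dDistant_iff d k r (y.1.parts.erase r)
            rwa [Multiset.cons_erase y.2] at this
  rw [distantPartitionsMin, ← Nat.card_congr (Equiv.sumCompl fun x : {p // Q p} => r ∈ x.1.parts),
    Nat.card_sum, add_comm, Nat.card_congr without_r, Nat.card_congr with_r]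
  rfl

theorem distantPartitions_succ_zero (d k : ℕ) : distantPartitions d (k + 1) 0 = 0 := by
  rw [distantPartitions_eq_distantPartitionsMin_one, distantPartitionsMin_succ_zero]

theorem distantPartitions_succ_succ (d k n : ℕ) :
    distantPartitions d (k + 1) (n + 1) =
      distantPartitionsMin d (k + 1) (n + 1) 2 + distantPartitionsMin d k n (1 + d) := by
  rw [distantPartitions_eq_distantPartitionsMin_one,
    distantPartitionsMin_eq_add d k le_rfl (Nat.le_add_left 1 n), Nat.add_sub_cancel]

section AlternatingSum

open Finset

variable (f : ℕ → ℕ → ℤ) (k : ℕ)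

theorem sum_range_alternating_diagonal_zero :
    ∑ i ∈ range (k + 1 + 1), (-1) ^ i * (if i ≤ 0 then f (k + 1 - i) (0 - i) else 0) =
      f (k + 1) 0 := by
  rw [sum_range_succ']
  simp

theorem sum_range_alternating_diagonal_succ (n : ℕ) :
    ∑ i ∈ range (k + 1 + 1), (-1) ^ i * (if i ≤ n + 1 then f (k + 1 - i) (n + 1 - i) else 0) =
      f (k + 1) (n + 1) -
        ∑ i ∈ range (k + 1), (-1) ^ i * (if i ≤ n then f (k - i) (n - i) else 0) := by
  rw [sum_range_succ', sub_eq_add_neg, add_comm (f _ _), ← sum_neg_distrib]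
  congr 1
  · refine sum_congr rfl fun i _ => ?_
    simp only [Nat.add_sub_add_right, Nat.add_le_add_iff_right, pow_succ]
    split_ifs <;> ring
  · simp

end AlternatingSum

theorem stmt_0_general (n k : ℕ) :
    (distantPartitionsMin 1 k n 2 : ℤ) =
      ∑ i ∈ Finset.range (k + 1),
        (-1 : ℤ) ^ i * (if i ≤ n then (distantPartitions 1 (k - i) (n - i) : ℤ) else 0) := by
  induction k generalizing n with
  | zero => simp [distantPartitionsMin_zero_left]
  | succ k ih =>
    cases n with
    | zero =>
      rw [sum_range_alternating_diagonal_zero (fun k n => (distantPartitions 1 k n : ℤ)),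
        distantPartitionsMin_succ_zero, distantPartitions_succ_zero, Nat.cast_zero]
    | succ n =>
      rw [sum_range_alternating_diagonal_succ (fun k n => (distantPartitions 1 k n : ℤ)), ← ih,
        distantPartitions_succ_succ]
      push_cast
      ring

/-- `p^{(1)}_k(n,2) = Σ_{i=0}^{k} (-1)^i p^{(1)}_{k-i}(n-i)`,
where any term whose first argument would be negative is taken to be `0`. -/
theorem stmt_0 (n k : ℕ) (hk : 1 ≤ k) :
    (distantPartitionsMin 1 k n 2 : ℤ) =
      ∑ i ∈ Finset.range (k + 1),
        (-1 : ℤ) ^ i * (if i ≤ n then (distantPartitions 1 (k - i) (n - i) : ℤ) else 0) :=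
  stmt_0_general n k
end

section
/- For all natural numbers n, k, and d with k ≥ 1 and d ≥ 1, the number of partitions of n into exactly k parts in which any two distinct parts differ by at least d equals the sum over all integers i ≥ d with k·i ≤ n + d - 1 of the number of partitions of n - k·i + d - 1 into exactly k - 1 parts with pairwise differences at least d: p^{(d)}_k(n) = Σ_{i ≥ d} p^{(d)}_{k-1}(n - k·i + d - 1). (The sum has only finitely many nonzero terms.) -/
namespace Multiset

variable {d : ℕ}

theorem dDistant_map_add_iff (t : ℕ) (s : Multiset ℕ) :
    (s.map (· + t)).DDistant d ↔ s.DDistant d := by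
  simp only [DDistant, forall_mem_map_iff, ← map_erase _ (add_left_injective t)]
  refine forall₂_congr fun a _ => forall₂_congr fun b _ => ?_
  omega

theorem dDistant_cons_iff (a : ℕ) (s : Multiset ℕ) :
    (a ::ₘ s).DDistant d ↔ (∀ b ∈ s, d ≤ max a b - min a b) ∧ s.DDistant d := by
  constructor
  · intro h
    refine ⟨fun b hb => h a (mem_cons_self a s) b (by simpa using hb), fun x hx y hy => ?_⟩
    by_cases hxa : x = a
    · subst hxa
      exact h x (mem_cons_self x s) y (by simpa using mem_of_mem_erase hy)
    · exact h x (mem_cons_of_mem hx) y (by simp [erase_cons_tail s (Ne.symm hxa), hy])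
  · rintro ⟨ha, hs⟩ x hx y hy
    by_cases hxa : x = a
    · subst hxa
      exact ha y (by simpa using hy)
    · rw [erase_cons_tail s (Ne.symm hxa), mem_cons] at hy
      have hxs : x ∈ s := (mem_cons.1 hx).resolve_left hxa
      rcases hy with rfl | hy
      · simpa [max_comm, min_comm] using ha x hxs
      · exact hs x hxs y hy

theorem DDistant.add_le_of_mem_erase {s : Multiset ℕ} (h : s.DDistant d) {a b : ℕ} (ha : a ∈ s)
    (hb : b ∈ s.erase a) (hab : a ≤ b) : a + d ≤ b := by
  have := h a ha b hb
  omega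

end Multiset

open Multiset

def consShift (a t : ℕ) (r : Multiset ℕ) : Multiset ℕ :=
  a ::ₘ r.map (· + t)

theorem consShift_injective (a t : ℕ) : Function.Injective (consShift a t) := fun _ _ h =>
  map_injective (add_left_injective t) ((cons_inj_right a).1 h)

theorem mem_consShift_self {a t : ℕ} {r : Multiset ℕ} : a ∈ consShift a t r :=
  mem_cons_self a _

theorem card_consShift (a t : ℕ) (r : Multiset ℕ) : (consShift a t r).card = r.card + 1 := by
  simp [consShift]

theorem sum_consShift (a t : ℕ) (r : Multiset ℕ) :
    (consShift a t r).sum = a + r.sum + r.card * t := by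
  simp [consShift, sum_map_add, map_const', add_assoc]

theorem le_of_mem_consShift {a t b : ℕ} {r : Multiset ℕ} (hr : ∀ c ∈ r, a ≤ c + t)
    (hb : b ∈ consShift a t r) : a ≤ b := by
  rcases mem_cons.1 hb with rfl | hb
  · rfl
  · obtain ⟨c, hc, rfl⟩ := mem_map.1 hb
    exact hr c hc

theorem dDistant_consShift_iff {d a t : ℕ} {r : Multiset ℕ} (hr : ∀ c ∈ r, a + d ≤ c + t) :
    (consShift a t r).DDistant d ↔ r.DDistant d := by
  rw [consShift, dDistant_cons_iff, dDistant_map_add_iff, and_iff_right_iff_imp]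
  intro _ b hb
  obtain ⟨c, hc, rfl⟩ := mem_map.1 hb
  have := hr c hc
  omega

theorem eq_consShift_erase {s : Multiset ℕ} {m t : ℕ} (hm : m ∈ s)
    (hs : ∀ b ∈ s.erase m, t ≤ b) : s = consShift m t ((s.erase m).map (· - t)) := by
  rw [consShift, map_map]
  conv_lhs => rw [← cons_erase hm, ← map_id (s.erase m)]
  congr 1
  exact map_congr rfl fun b hb => (Nat.sub_add_cancel (hs b hb)).symm

open Classical in
noncomputable def distantParts (d k n : ℕ) : Finset (Multiset ℕ) :=
  (Finset.univ.filter fun p : n.Partition => p.parts.card = k ∧ p.parts.DDistant d).map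
    ⟨Nat.Partition.parts, fun _ _ => Nat.Partition.ext⟩

theorem mem_distantParts {d k n : ℕ} {s : Multiset ℕ} :
    s ∈ distantParts d k n ↔ (∀ a ∈ s, 0 < a) ∧ s.sum = n ∧ s.card = k ∧ s.DDistant d := by
  simp only [distantParts, Finset.mem_map, Finset.mem_filter, Finset.mem_univ, true_and]
  constructor
  · rintro ⟨p, hp, rfl⟩
    exact ⟨fun _ => p.parts_pos, p.parts_sum, hp⟩
  · rintro ⟨hpos, hsum, hs⟩
    exact ⟨⟨s, hpos _, hsum⟩, hs, rfl⟩

theorem distantPartitions_eq_card (d k n : ℕ) :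
    distantPartitions d k n = (distantParts d k n).card := by
  classical
  rw [distantPartitions, Nat.card_eq_fintype_card, Fintype.card_subtype, distantParts,
    Finset.card_map]

section

variable {d k n : ℕ}

theorem consShift_mem_distantParts_iff (hd : 1 ≤ d) (hk : 1 ≤ k) {i : ℕ} (hi : d ≤ i)
    {r : Multiset ℕ} (hr : ∀ c ∈ r, 0 < c) :
    consShift (i - d + 1) i r ∈ distantParts d k n ↔
      r ∈ distantParts d (k - 1) (n + d - 1 - k * i) ∧ k * i ≤ n + d - 1 := by
  have hshift : ∀ c ∈ r, i - d + 1 + d ≤ c + i := fun c hc => by have := hr c hc; omega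
  have hpos : ∀ b ∈ consShift (i - d + 1) i r, 0 < b := fun b hb =>
    lt_of_lt_of_le (Nat.succ_pos _) (le_of_mem_consShift (fun c hc => by omega) hb)
  obtain ⟨k, rfl⟩ := Nat.exists_eq_add_of_le' hk
  have hki : (k + 1) * i = i + k * i := by ring
  rw [mem_distantParts, mem_distantParts, sum_consShift, card_consShift,
    dDistant_consShift_iff hshift, Nat.add_sub_cancel, hki]
  constructor
  · rintro ⟨-, hsum, hcard, hdist⟩
    obtain rfl : r.card = k := by omega
    exact ⟨⟨hr, by omega, rfl, hdist⟩, by omega⟩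
  · rintro ⟨⟨-, hsum, rfl, hdist⟩, hle⟩
    exact ⟨hpos, by omega, rfl, hdist⟩

theorem exists_eq_consShift_of_mem_distantParts (hk : 1 ≤ k) {s : Multiset ℕ}
    (hs : s ∈ distantParts d k n) :
    ∃ i, d ≤ i ∧ ∃ r : Multiset ℕ, (∀ c ∈ r, 0 < c) ∧ s = consShift (i - d + 1) i r := by
  obtain ⟨hpos, -, hcard, hdist⟩ := mem_distantParts.1 hs
  have hne : s ≠ 0 := by rintro rfl; simp at hcard; omega
  obtain ⟨m, hm, hmin⟩ := exists_min_image id hne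
  have hm0 := hpos m hm
  have hgap : ∀ b ∈ s.erase m, m + d ≤ b := fun b hb =>
    hdist.add_le_of_mem_erase hm hb (hmin b (mem_of_mem_erase hb))
  refine ⟨m + d - 1, by omega, (s.erase m).map (· - (m + d - 1)), ?_, ?_⟩
  · intro c hc
    obtain ⟨b, hb, rfl⟩ := mem_map.1 hc
    have := hgap b hb
    omega
  · rw [show m + d - 1 - d + 1 = m by omega]
    exact eq_consShift_erase hm fun b hb => by have := hgap b hb; omega

theorem distantParts_eq_biUnion (hd : 1 ≤ d) (hk : 1 ≤ k) :
    distantParts d k n =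
      ((Finset.range (n + d)).filter fun i => d ≤ i ∧ k * i ≤ n + d - 1).biUnion fun i =>
        (distantParts d (k - 1) (n + d - 1 - k * i)).image (consShift (i - d + 1) i) := by
  ext s
  simp only [Finset.mem_biUnion, Finset.mem_filter, Finset.mem_range, Finset.mem_image]
  constructor
  · intro hs
    obtain ⟨i, hi, r, hr, rfl⟩ := exists_eq_consShift_of_mem_distantParts hk hs
    obtain ⟨hmem, hle⟩ := (consShift_mem_distantParts_iff hd hk hi hr).1 hs
    have : i ≤ k * i := Nat.le_mul_of_pos_left i hk
    exact ⟨i, ⟨by omega, hi, hle⟩, r, hmem, rfl⟩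
  · rintro ⟨i, ⟨-, hi, hle⟩, r, hr, rfl⟩
    exact (consShift_mem_distantParts_iff hd hk hi (mem_distantParts.1 hr).1).2 ⟨hr, hle⟩

end

theorem eq_of_consShift_eq {d i j : ℕ} {r r' : Multiset ℕ} (hi : d ≤ i) (hj : d ≤ j)
    (hr : ∀ c ∈ r, 0 < c) (hr' : ∀ c ∈ r', 0 < c)
    (h : consShift (i - d + 1) i r = consShift (j - d + 1) j r') : i = j := by
  have hji : j - d + 1 ≤ i - d + 1 :=
    le_of_mem_consShift (fun c hc => by have := hr' c hc; omega) (h ▸ mem_consShift_self)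
  have hij : i - d + 1 ≤ j - d + 1 :=
    le_of_mem_consShift (fun c hc => by have := hr c hc; omega) (h.symm ▸ mem_consShift_self)
  omega

/-- `p^{(d)}_k(n) = Σ_{i ≥ d, k·i ≤ n+d-1} p^{(d)}_{k-1}(n + d - 1 - k·i)`. -/
theorem stmt_7 (n k d : ℕ) (hk : 1 ≤ k) (hd : 1 ≤ d) :
    distantPartitions d k n =
      ∑ i ∈ (Finset.range (n + d)).filter (fun i => d ≤ i ∧ k * i ≤ n + d - 1),
        distantPartitions d (k - 1) (n + d - 1 - k * i) := by
  simp only [distantPartitions_eq_card]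
  rw [distantParts_eq_biUnion hd hk, Finset.card_biUnion]
  · exact Finset.sum_congr rfl fun i _ =>
      Finset.card_image_of_injective _ (consShift_injective _ _)
  · intro i hi j hj hij
    refine Finset.disjoint_left.2 fun s hsi hsj => hij ?_
    obtain ⟨r, hr, rfl⟩ := Finset.mem_image.1 hsi
    obtain ⟨r', hr', h⟩ := Finset.mem_image.1 hsj
    exact (eq_of_consShift_eq (Finset.mem_filter.1 hj).2.1 (Finset.mem_filter.1 hi).2.1
      (mem_distantParts.1 hr').1 (mem_distantParts.1 hr).1 h).symm
end

section
/- For all natural numbers n and d, the number of partitions of n equals the number of partitions of 2n + d·C(n,2) into exactly n parts in which any two distinct parts differ by at least d: p(n) = p^{(d)}_n(2n + d·n(n-1)/2). -/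
namespace List

def addStairs (d : ℕ) : List ℕ → List ℕ
  | [] => []
  | a :: l => (a + 1 + d * l.length) :: addStairs d l

def subStairs (d : ℕ) : List ℕ → List ℕ
  | [] => []
  | a :: l => (a - (1 + d * l.length)) :: subStairs d l

variable (d : ℕ)

@[simp]
theorem length_addStairs : ∀ l : List ℕ, (l.addStairs d).length = l.length
  | [] => rfl
  | _ :: l => congrArg (· + 1) (length_addStairs l)

@[simp]
theorem length_subStairs : ∀ l : List ℕ, (l.subStairs d).length = l.length
  | [] => rfl
  | _ :: l => congrArg (· + 1) (length_subStairs l)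

theorem sum_addStairs : ∀ l : List ℕ,
    (l.addStairs d).sum = l.sum + l.length + d * l.length.choose 2
  | [] => rfl
  | a :: l => by
    simp only [addStairs, sum_cons, length_cons, sum_addStairs l, Nat.choose_succ_succ',
      Nat.choose_one_right]
    ring

theorem subStairs_addStairs : ∀ l : List ℕ, (l.addStairs d).subStairs d = l
  | [] => rfl
  | a :: l => by simp [addStairs, subStairs, subStairs_addStairs l, Nat.add_assoc]

theorem pos_of_mem_addStairs : ∀ {l : List ℕ}, ∀ b ∈ l.addStairs d, 0 < b
  | _ :: _, _, .head _ => by omega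
  | _ :: _, b, .tail _ hb => pos_of_mem_addStairs b hb

theorem le_of_mem_addStairs {a : ℕ} : ∀ {l : List ℕ}, (∀ x ∈ l, x ≤ a) →
    ∀ b ∈ l.addStairs d, b + d ≤ a + 1 + d * l.length
  | c :: l, h, b, hb => by
    have hc := h c mem_cons_self
    simp only [length_cons, Nat.mul_succ]
    rcases mem_cons.1 hb with rfl | hb
    · omega
    · have := le_of_mem_addStairs (fun x hx => h x (mem_cons_of_mem c hx)) b hb
      omega

theorem pairwise_addStairs : ∀ {l : List ℕ}, l.Pairwise (· ≥ ·) →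
    (l.addStairs d).Pairwise (fun a b => b + d ≤ a)
  | [], _ => Pairwise.nil
  | _ :: _, h => by
    rw [pairwise_cons] at h
    exact .cons (le_of_mem_addStairs d h.1) (pairwise_addStairs h.2)

variable {d}

theorem one_add_mul_length_le_of_pairwise : ∀ {a : ℕ} {l : List ℕ},
    (a :: l).Pairwise (fun x y => y + d ≤ x) → (∀ x ∈ a :: l, 0 < x) → 1 + d * l.length ≤ a
  | a, [], _, hpos => by simpa using Nat.one_le_iff_ne_zero.2 (hpos a mem_cons_self).ne'
  | a, b :: l, hp, hpos => by
    have hba : b + d ≤ a := (pairwise_cons.1 hp).1 b mem_cons_self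
    have hb := one_add_mul_length_le_of_pairwise (pairwise_cons.1 hp).2
      (fun x hx => hpos x (mem_cons_of_mem a hx))
    simp only [length_cons, Nat.mul_succ]
    omega

theorem addStairs_subStairs : ∀ {l : List ℕ}, l.Pairwise (fun x y => y + d ≤ x) →
    (∀ x ∈ l, 0 < x) → (l.subStairs d).addStairs d = l
  | [], _, _ => rfl
  | a :: l, hp, hpos => by
    have ha := one_add_mul_length_le_of_pairwise hp hpos
    simp only [subStairs, addStairs, length_subStairs,
      addStairs_subStairs (pairwise_cons.1 hp).2 (fun x hx => hpos x (mem_cons_of_mem a hx))]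
    congr 1
    omega

theorem pairwise_subStairs : ∀ {l : List ℕ}, l.Pairwise (fun x y => y + d ≤ x) →
    (∀ x ∈ l, 0 < x) → (l.subStairs d).Pairwise (· ≥ ·)
  | [], _, _ => Pairwise.nil
  | [_], _, _ => pairwise_singleton _ _
  | a :: b :: l, hp, hpos => by
    have hpos' : ∀ x ∈ b :: l, 0 < x := fun x hx => hpos x (mem_cons_of_mem a hx)
    have hba : b + d ≤ a := (pairwise_cons.1 hp).1 b mem_cons_self
    have hb := one_add_mul_length_le_of_pairwise (pairwise_cons.1 hp).2 hpos'
    have htail := isChain_iff_pairwise.2 (pairwise_subStairs (pairwise_cons.1 hp).2 hpos')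
    refine isChain_iff_pairwise.1 (htail.cons_cons ?_)
    simp only [length_cons, Nat.mul_succ]
    omega

end List

/-- The staircase `l ↦ (lᵢ + 1 + d (k - 1 - i))ᵢ` between weakly decreasing `k`-tuples of naturals
and `d`-gapped `k`-tuples of positive naturals. -/
def addStairsEquiv (d k m : ℕ) :
    {l : List ℕ // l.Pairwise (· ≥ ·) ∧ l.length = k ∧ l.sum = m} ≃
      {l : List ℕ // l.Pairwise (fun a b => b + d ≤ a) ∧ (∀ a ∈ l, 0 < a) ∧ l.length = k ∧
        l.sum = m + k + d * k.choose 2} where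
  toFun l := ⟨l.1.addStairs d, List.pairwise_addStairs d l.2.1, List.pos_of_mem_addStairs d,
    by simp [l.2.2.1], by rw [List.sum_addStairs, l.2.2.1, l.2.2.2]⟩
  invFun l := ⟨l.1.subStairs d, List.pairwise_subStairs l.2.1 l.2.2.1, by simp [l.2.2.2.1], by
    have h := List.sum_addStairs d (l.1.subStairs d)
    rw [List.addStairs_subStairs l.2.1 l.2.2.1, l.2.2.2.2, List.length_subStairs, l.2.2.2.1] at h
    omega⟩
  left_inv l := Subtype.ext (List.subStairs_addStairs d l.1)
  right_inv l := Subtype.ext (List.addStairs_subStairs l.2.1 l.2.2.1)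

namespace Multiset

theorem sort_coe_of_pairwise {α : Type*} (r : α → α → Prop) [DecidableRel r] [IsTrans α r]
    [Std.Antisymm r] [Std.Total r] {l : List α} (h : l.Pairwise r) : (l : Multiset α).sort r = l :=
  List.mergeSort_eq_self r h

theorem filter_ne_add_replicate {α : Type*} [DecidableEq α] (s : Multiset α) (a : α) :
    s.filter (· ≠ a) + replicate (card s - card (s.filter (· ≠ a))) a = s := by
  have hs := filter_add_not (· ≠ a) s
  simp only [not_not, filter_eq'] at hs
  have hcard := congrArg card hs
  rw [card_add, card_replicate] at hcard
  rwa [show card s - card (s.filter (· ≠ a)) = count a s by omega]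

theorem dDistant_coe_iff {d : ℕ} {l : List ℕ} :
    DDistant d (l : Multiset ℕ) ↔ l.Pairwise (fun a b => d ≤ max a b - min a b) := by
  constructor
  · intro h
    refine List.pairwise_iff_forall_sublist.2 fun {a b} hab => h a ?_ b ?_
    · exact mem_coe.2 (hab.subset (by simp))
    · rw [coe_erase]
      simpa using (hab.erase a).subset (by simp)
  · intro h a ha b hb
    rw [coe_erase, mem_coe] at hb
    have := (List.perm_cons_erase (mem_coe.1 ha)).pairwise h fun {x y} hxy => by
      rwa [max_comm, min_comm]
    exact (List.pairwise_cons.1 this).1 b hb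

theorem dDistant_coe_iff_of_pairwise {d : ℕ} {l : List ℕ} (hl : l.Pairwise (· ≥ ·)) :
    DDistant d (l : Multiset ℕ) ↔ l.Pairwise (fun a b => b + d ≤ a) := by
  rw [dDistant_coe_iff]
  refine ⟨fun h => (hl.and h).imp fun {a b} h => ?_, List.Pairwise.imp fun {a b} h => ?_⟩
  · obtain ⟨hab, h⟩ := h
    rw [max_eq_left hab, min_eq_right hab] at h
    omega
  · rw [max_eq_left (by omega), min_eq_right (by omega)]
    omega

end Multiset

namespace Nat.Partition

theorem card_parts_le {m : ℕ} (p : m.Partition) : p.parts.card ≤ m := by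
  simpa [p.parts_sum] using Multiset.card_nsmul_le_sum (a := 1) fun _ hx => p.parts_pos hx

def cardLeEquiv (m k : ℕ) :
    {p : m.Partition // p.parts.card ≤ k} ≃
      {l : List ℕ // l.Pairwise (· ≥ ·) ∧ l.length = k ∧ l.sum = m} where
  toFun p := ⟨(p.1.parts + Multiset.replicate (k - p.1.parts.card) 0).sort (· ≥ ·),
    Multiset.pairwise_sort _ _, by simp [p.2], by simp [← Multiset.sum_coe, p.1.parts_sum]⟩
  invFun l := ⟨ofSums m l.1 (by rw [Multiset.sum_coe, l.2.2.2]), by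
    simpa [← l.2.2.1] using Multiset.card_le_card (Multiset.filter_le (· ≠ 0) (l.1 : Multiset ℕ))⟩
  left_inv p := by
    refine Subtype.ext (Nat.Partition.ext ?_)
    rw [ofSums_parts, Multiset.sort_eq, Multiset.filter_add, Multiset.filter_eq_self.2
      fun _ hx => (p.1.parts_pos hx).ne', Multiset.filter_eq_nil.2
      fun _ hx => not_not.2 (Multiset.eq_of_mem_replicate hx), add_zero]
  right_inv l := by
    refine Subtype.ext ?_
    have h := Multiset.filter_ne_add_replicate (l.1 : Multiset ℕ) 0
    rw [Multiset.coe_card, l.2.2.1] at h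
    simp only [ofSums_parts, h, Multiset.sort_coe_of_pairwise _ l.2.1]

def distantEquiv (d m k : ℕ) :
    {p : m.Partition // p.parts.card = k ∧ Multiset.DDistant d p.parts} ≃
      {l : List ℕ // l.Pairwise (fun a b => b + d ≤ a) ∧ (∀ a ∈ l, 0 < a) ∧ l.length = k ∧
        l.sum = m} where
  toFun p := ⟨p.1.parts.sort (· ≥ ·),
    (Multiset.dDistant_coe_iff_of_pairwise (Multiset.pairwise_sort _ _)).1 (by simpa using p.2.2),
    fun _ ha => p.1.parts_pos ((Multiset.mem_sort _).1 ha), by simp [p.2.1],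
    by rw [← Multiset.sum_coe, Multiset.sort_eq, p.1.parts_sum]⟩
  invFun l := ⟨⟨l.1, fun ha => l.2.2.1 _ (Multiset.mem_coe.1 ha), by simp [l.2.2.2.2]⟩,
    by simp [l.2.2.2.1],
    (Multiset.dDistant_coe_iff_of_pairwise (l.2.1.imp fun h => by omega)).2 l.2.1⟩
  left_inv p := Subtype.ext (Nat.Partition.ext (Multiset.sort_eq _ _))
  right_inv l := Subtype.ext (Multiset.sort_coe_of_pairwise _ (l.2.1.imp fun h => by omega))

end Nat.Partition

/-- `p(n) = p^{(d)}_n(2n + d·C(n,2))`. -/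
theorem stmt_15 (n d : ℕ) :
    Nat.card n.Partition = distantPartitions d n (2 * n + d * n.choose 2) := by
  have hN : 2 * n + d * n.choose 2 = n + n + d * n.choose 2 := by ring
  rw [distantPartitions, hN]
  exact Nat.card_congr <|
    (Equiv.subtypeUnivEquiv Nat.Partition.card_parts_le).symm.trans <|
      (Nat.Partition.cardLeEquiv n n).trans <|
        (addStairsEquiv d n n).trans (Nat.Partition.distantEquiv d _ n).symm
end
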